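/- Suppose Q is a Markov kernel on Bᶜ ∪ A and r : Bᶜ × (Bᶜ ∪ A) → (0, ∞) is measurable such that for every y ∈ Bᶜ and every measurable D ⊆ Bᶜ ∪ A, P(y, D) = ∫_D r(y, z) Q(y, dz). Define the kernel K(y, dz) = r(y, z) P(y, dz) restricted to z ∈ Bᶜ, η(y) = ∫_A r(y, z) P(y, dz), iterates K⁰η = η and Kⁿη(y) = ∫_{Bᶜ} (K^{n−1}η)(z) K(y, dz), and the estimator R = 1(T < ∞) ∏_{j=1}^{T} r(Y_{j−1}, Y_j). Then for every y ∈ Bᶜ and every n ≥ 1, E_y^Q[R²; T = n] = (K^{n−1}η)(y), and consequently E_y^Q[R²] = Σ_{n=0}^∞ (Kⁿη)(y), where E_y^Q is expectation for the chain with kernel Q started at y. -/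

import Mathlib

open MeasureTheory ProbabilityTheory Filter Set
open scoped ENNReal NNReal

noncomputable section

/-- Prepend a point to a path. -/
def prepend {𝒳 : Type*} (y : 𝒳) (ω : ℕ → 𝒳) : ℕ → 𝒳 := fun n =>
  match n with
  | 0 => y
  | k + 1 => ω k

/-- First hitting time of `B` (with value `⊤` if `B` is never hit). -/
def hitTime {𝒳 : Type*} (B : Set 𝒳) (ω : ℕ → 𝒳) : ℕ∞ :=
  sInf ((fun n : ℕ => (n : ℕ∞)) '' {n : ℕ | ω n ∈ B})

/-- The iterates `Kⁿη` of `η` under the kernel `K(y, dz) = r(y, z) P(y, dz)` restricted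
to `z ∈ Bᶜ`, starting from `K⁰η = η`. -/
def iterK {𝒳 : Type*} [MeasurableSpace 𝒳] (P : Kernel 𝒳 𝒳)
    (r : 𝒳 → 𝒳 → ℝ≥0∞) (B : Set 𝒳) (η : 𝒳 → ℝ≥0∞) : ℕ → 𝒳 → ℝ≥0∞
  | 0 => η
  | n + 1 => fun y => ∫⁻ z in Bᶜ, iterK P r B η n z * r y z ∂(P y)

/-- The importance-sampling estimator `R = 1(T < ∞) ∏_{j=1}^{T} r(Y_{j−1}, Y_j)`. -/
def estR {𝒳 : Type*} (B : Set 𝒳) (r : 𝒳 → 𝒳 → ℝ≥0∞) (ω : ℕ → 𝒳) : ℝ≥0∞ :=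
  if hitTime B ω = ⊤ then 0
  else ∏ j ∈ Finset.range (hitTime B ω).toNat, r (ω j) (ω (j + 1))

section Aux
open scoped Classical
variable {𝒳 : Type*} {B : Set 𝒳} {ω : ℕ → 𝒳} {y : 𝒳}

lemma hitTime_eq_find (h : ∃ n, ω n ∈ B) : hitTime B ω = (Nat.find h : ℕ∞) := by
  apply le_antisymm
  · exact sInf_le ⟨Nat.find h, Nat.find_spec h, rfl⟩
  · apply le_sInf
    rintro _ ⟨m, hm, rfl⟩
    simpa using (Nat.cast_le (α := ℕ∞)).2 (Nat.find_min' h hm)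

lemma hitTime_eq_top_iff : hitTime B ω = ⊤ ↔ ∀ n, ω n ∉ B := by
  constructor
  · intro h n hn
    have := hitTime_eq_find ⟨n, hn⟩
    rw [h] at this
    exact (ENat.coe_ne_top _ this.symm)
  · intro h
    have : {n : ℕ | ω n ∈ B} = ∅ := eq_empty_iff_forall_notMem.2 h
    rw [hitTime, this, image_empty, sInf_empty]

lemma hitTime_eq_coe_iff {n : ℕ} :
    hitTime B ω = (n : ℕ∞) ↔ ω n ∈ B ∧ ∀ k < n, ω k ∉ B := by
  constructor
  · intro hEq
    have hne : ∃ k, ω k ∈ B := by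
      by_contra hc
      push_neg at hc
      rw [hitTime_eq_top_iff.2 hc] at hEq
      exact (ENat.coe_ne_top n) hEq.symm
    rw [hitTime_eq_find hne] at hEq
    have hfind : Nat.find hne = n := by exact_mod_cast hEq
    subst hfind
    exact ⟨Nat.find_spec hne, fun k hk => Nat.find_min hne hk⟩
  · rintro ⟨h1, h2⟩
    have hne : ∃ k, ω k ∈ B := ⟨n, h1⟩
    rw [hitTime_eq_find hne]
    norm_cast
    exact (Nat.find_eq_iff hne).2 ⟨h1, fun m hm => h2 m hm⟩

lemma hitTime_prepend_succ_iff (hy : y ∉ B) {n : ℕ} :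
    hitTime B (prepend y ω) = ((n + 1 : ℕ) : ℕ∞) ↔ hitTime B ω = (n : ℕ∞) := by
  simp only [hitTime_eq_coe_iff]
  constructor
  · rintro ⟨h1, h2⟩
    exact ⟨h1, fun k hk => h2 (k + 1) (Nat.succ_lt_succ hk)⟩
  · rintro ⟨h1, h2⟩
    refine ⟨h1, ?_⟩
    intro k hk
    match k with
    | 0 => exact hy
    | k + 1 => exact h2 k (Nat.lt_of_succ_lt_succ hk)

lemma measurable_prepend [MeasurableSpace 𝒳] (y : 𝒳) : Measurable (prepend y) := by
  apply measurable_pi_lambda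
  intro n
  match n with
  | 0 => exact measurable_const
  | k + 1 => exact measurable_pi_apply k

/-- The square of the product of ratios along the first `n` steps. -/
def Gfun {𝒳 : Type*} (r : 𝒳 → 𝒳 → ℝ≥0∞) (n : ℕ) (ω : ℕ → 𝒳) : ℝ≥0∞ :=
  (∏ j ∈ Finset.range n, r (ω j) (ω (j + 1))) ^ 2

/-- The event `{T = n}`. -/
def Tset {𝒳 : Type*} (B : Set 𝒳) (n : ℕ) : Set (ℕ → 𝒳) :=
  {ω | hitTime B ω = (n : ℕ∞)}

lemma estR_sq_eq_on_Tset {r : 𝒳 → 𝒳 → ℝ≥0∞} {n : ℕ} (h : ω ∈ Tset B n) :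
    (estR B r ω) ^ 2 = Gfun r n ω := by
  have h' : hitTime B ω = (n : ℕ∞) := h
  rw [estR, Gfun, h']
  simp

lemma measurableSet_Tset [MeasurableSpace 𝒳] (hB : MeasurableSet B) (n : ℕ) :
    MeasurableSet (Tset B n) := by
  have : Tset B n = {ω : ℕ → 𝒳 | ω n ∈ B} ∩ ⋂ k ∈ Finset.range n, {ω : ℕ → 𝒳 | ω k ∈ Bᶜ} := by
    ext ω
    simp [Tset, hitTime_eq_coe_iff, mem_iInter]
  rw [this]
  refine (measurable_pi_apply n hB).inter ?_
  exact MeasurableSet.biInter (Finset.range n).countable_toSet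
    (fun k _ => measurable_pi_apply k hB.compl)

lemma measurable_Gfun [MeasurableSpace 𝒳] {r : 𝒳 → 𝒳 → ℝ≥0∞}
    (hr : Measurable (Function.uncurry r)) (n : ℕ) : Measurable (Gfun r n) := by
  apply Measurable.pow_const
  apply Finset.measurable_prod
  intro j _
  have : Measurable fun ω : ℕ → 𝒳 => (ω j, ω (j + 1)) :=
    (measurable_pi_apply j).prodMk (measurable_pi_apply (j + 1))
  exact hr.comp this

lemma indicator_Gfun_prepend {r : 𝒳 → 𝒳 → ℝ≥0∞} (hy : y ∉ B) (n : ℕ) (ω' : ℕ → 𝒳) :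
    (Tset B (n + 1)).indicator (Gfun r (n + 1)) (prepend y ω') =
      (Tset B n).indicator (fun ω => r y (ω 0) ^ 2 * Gfun r n ω) ω' := by
  by_cases h : ω' ∈ Tset B n
  · have h2 : prepend y ω' ∈ Tset B (n + 1) := by
      have : hitTime B ω' = (n : ℕ∞) := h
      exact (hitTime_prepend_succ_iff (ω := ω') hy).2 this
    rw [indicator_of_mem h2, indicator_of_mem h]
    show (∏ j ∈ Finset.range (n + 1), r (prepend y ω' j) (prepend y ω' (j + 1))) ^ 2 = _
    rw [Finset.prod_range_succ']
    have hterm : ∀ j, r (prepend y ω' (j + 1)) (prepend y ω' (j + 1 + 1)) = r (ω' j) (ω' (j + 1)) :=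
      fun j => rfl
    simp only [hterm]
    show ((∏ j ∈ Finset.range n, r (ω' j) (ω' (j + 1))) * r y (ω' 0)) ^ 2 = _
    rw [mul_pow, mul_comm]
    rfl
  · have h2 : prepend y ω' ∉ Tset B (n + 1) := by
      intro hc
      exact h ((hitTime_prepend_succ_iff (ω := ω') hy).1 hc)
    rw [indicator_of_notMem h2, indicator_of_notMem h]

lemma estR_sq_eq_tsum {r : 𝒳 → 𝒳 → ℝ≥0∞} (ω : ℕ → 𝒳) :
    (estR B r ω) ^ 2 = ∑' n : ℕ, (Tset B n).indicator (Gfun r n) ω := by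
  by_cases htop : hitTime B ω = ⊤
  · have h0 : estR B r ω = 0 := by rw [estR, if_pos htop]
    rw [h0]
    have : ∀ n : ℕ, (Tset B n).indicator (Gfun r n) ω = 0 := by
      intro n
      apply indicator_of_notMem
      intro h
      have : hitTime B ω = (n : ℕ∞) := h
      rw [htop] at this
      exact (ENat.coe_ne_top n) this.symm
    simp [this]
  · lift hitTime B ω to ℕ using htop with m hm
    have hmem : ω ∈ Tset B m := hm.symm
    rw [estR_sq_eq_on_Tset hmem]
    rw [tsum_eq_single m]
    · rw [indicator_of_mem hmem]
    · intro n hn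
      apply indicator_of_notMem
      intro h
      have h1 : hitTime B ω = (n : ℕ∞) := h
      have h2 : hitTime B ω = (m : ℕ∞) := hmem
      rw [h2] at h1
      exact hn (by exact_mod_cast h1.symm)

end Aux

/-- for the importance sampler with likelihood ratios `r`,
`E_y^Q[R²; T = n] = (K^{n−1}η)(y)` for `n ≥ 1` and `E_y^Q[R²] = Σ_{n≥0} (Kⁿη)(y)`. -/
theorem statement4 {𝒳 : Type*} [MeasurableSpace 𝒳] [StandardBorelSpace 𝒳]
    (P : Kernel 𝒳 𝒳) [IsMarkovKernel P]
    (B A : Set 𝒳) (hB : MeasurableSet B) (hA : MeasurableSet A) (hAB : A ⊆ B)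
    -- `Q` is a Markov kernel living on `Bᶜ ∪ A`
    (Q : Kernel 𝒳 𝒳) [IsMarkovKernel Q]
    (hQsupp : ∀ y ∉ B, Q y (Bᶜ ∪ A) = 1)
    -- likelihood ratio function `r : Bᶜ × (Bᶜ ∪ A) → (0, ∞)`
    (r : 𝒳 → 𝒳 → ℝ≥0∞) (hrmeas : Measurable (Function.uncurry r))
    (hrpos : ∀ y ∉ B, ∀ z ∈ Bᶜ ∪ A, 0 < r y z ∧ r y z ≠ ⊤)
    -- `P(y, D) = ∫_D r(y, z) Q(y, dz)` for `y ∈ Bᶜ` and measurable `D ⊆ Bᶜ ∪ A`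
    (hrel : ∀ y ∉ B, ∀ D : Set 𝒳, MeasurableSet D → D ⊆ Bᶜ ∪ A →
      P y D = ∫⁻ z in D, r y z ∂(Q y))
    -- `μQ y` is the law of the Markov chain with kernel `Q` started at `y`
    (μQ : 𝒳 → Measure (ℕ → 𝒳)) (hμmeas : Measurable μQ)
    (hμprob : ∀ y, IsProbabilityMeasure (μQ y))
    (hμchain : ∀ y, μQ y = (Q y).bind fun z => (μQ z).map (prepend y)) :
    ∀ y ∉ B,
      (∀ n : ℕ, 1 ≤ n →
        (∫⁻ ω in {ω | hitTime B ω = (n : ℕ∞)}, (estR B r ω) ^ 2 ∂(μQ y)) =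
          iterK P r B (fun x => ∫⁻ z in A, r x z ∂(P x)) (n - 1) y) ∧
      (∫⁻ ω, (estR B r ω) ^ 2 ∂(μQ y)) =
        ∑' n : ℕ, iterK P r B (fun x => ∫⁻ z in A, r x z ∂(P x)) n y := by
  intro y hy
  classical
  have hr1 : ∀ x : 𝒳, Measurable (r x) := fun x => hrmeas.comp measurable_prodMk_left
  set η : 𝒳 → ℝ≥0∞ := fun x => ∫⁻ z in A, r x z ∂(P x) with hηdef
  have hTmeas : ∀ n, MeasurableSet (Tset B n) := measurableSet_Tset hB
  have hGmeas : ∀ n, Measurable (Gfun r n) := measurable_Gfun hrmeas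
  have hInd : ∀ n, Measurable ((Tset B n).indicator (Gfun r n)) :=
    fun n => (hGmeas n).indicator (hTmeas n)
  set F : ℕ → 𝒳 → ℝ≥0∞ :=
    fun n z => ∫⁻ ω, (Tset B n).indicator (Gfun r n) ω ∂(μQ z) with hFdef
  have hFmeas : ∀ n, Measurable (F n) := fun n =>
    (Measure.measurable_lintegral (hInd n)).comp hμmeas
  have hFset : ∀ n z, F n z = ∫⁻ ω in Tset B n, Gfun r n ω ∂(μQ z) := fun n z =>
    lintegral_indicator (hTmeas n) _
  -- chain decomposition
  have hκ : ∀ x : 𝒳, Measurable (fun z => (μQ z).map (prepend x)) := fun x =>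
    (Measure.measurable_map _ (measurable_prepend x)).comp hμmeas
  have hstep : ∀ (x : 𝒳) (h : (ℕ → 𝒳) → ℝ≥0∞), Measurable h →
      ∫⁻ ω, h ω ∂(μQ x) = ∫⁻ z, ∫⁻ ω', h (prepend x ω') ∂(μQ z) ∂(Q x) := by
    intro x h hh
    rw [hμchain x, Measure.lintegral_bind (hκ x).aemeasurable hh.aemeasurable]
    exact lintegral_congr fun z => lintegral_map hh (measurable_prepend x)
  -- starting point
  have hS0 : ∀ z : 𝒳, MeasurableSet ((fun ω : ℕ → 𝒳 => ω 0) ⁻¹' {z}) := fun z =>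
    measurable_pi_apply 0 (measurableSet_singleton z)
  have hstart1 : ∀ z : 𝒳, μQ z ((fun ω : ℕ → 𝒳 => ω 0) ⁻¹' {z}) = 1 := by
    intro z
    rw [hμchain z, Measure.bind_apply (hS0 z) (hκ z).aemeasurable]
    have heq : ∀ w, ((μQ w).map (prepend z)) ((fun ω : ℕ → 𝒳 => ω 0) ⁻¹' {z}) = 1 := by
      intro w
      haveI := hμprob w
      rw [Measure.map_apply (measurable_prepend z) (hS0 z)]
      have : (prepend z) ⁻¹' ((fun ω : ℕ → 𝒳 => ω 0) ⁻¹' {z}) = univ := by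
        ext ω; simp [prepend]
      rw [this, measure_univ]
    simp only [heq]
    rw [lintegral_one, measure_univ]
  have hstart0 : ∀ z : 𝒳, μQ z {ω : ℕ → 𝒳 | ω 0 ≠ z} = 0 := by
    intro z
    haveI := hμprob z
    have hc : {ω : ℕ → 𝒳 | ω 0 ≠ z} = ((fun ω : ℕ → 𝒳 => ω 0) ⁻¹' {z})ᶜ := by
      ext ω; simp
    rw [hc, measure_compl (hS0 z) (measure_ne_top _ _), measure_univ, hstart1 z, tsub_self]
  -- base values of F
  have hF0B : ∀ z ∈ B, F 0 z = 1 := by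
    intro z hz
    haveI := hμprob z
    have hG0 : ∀ ω : ℕ → 𝒳, Gfun r 0 ω = 1 := by intro ω; simp [Gfun]
    have hFz : F 0 z = μQ z (Tset B 0) := by
      rw [hFset 0 z]
      rw [setLIntegral_congr_fun (hTmeas 0) (fun ω _ => hG0 ω)]
      simp
    rw [hFz]
    refine le_antisymm prob_le_one ?_
    calc (1 : ℝ≥0∞) = μQ z ((fun ω : ℕ → 𝒳 => ω 0) ⁻¹' {z}) := (hstart1 z).symm
      _ ≤ μQ z (Tset B 0) := by
          refine measure_mono fun ω hω => ?_
          have h0 : ω 0 = z := hω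
          show hitTime B ω = ((0 : ℕ) : ℕ∞)
          exact hitTime_eq_coe_iff.2 ⟨h0 ▸ hz, fun k hk => absurd hk (Nat.not_lt_zero k)⟩
  have hF0Bc : ∀ z ∉ B, F 0 z = 0 := by
    intro z hz
    have hnull : μQ z (Tset B 0) = 0 := by
      refine measure_mono_null (fun ω hω => ?_) (hstart0 z)
      have h0 : ω 0 ∈ B := (hitTime_eq_coe_iff.1 hω).1
      exact fun he => hz (he ▸ h0)
    rw [hFset 0 z]
    exact setLIntegral_measure_zero _ _ hnull
  have hFposB : ∀ n, ∀ z ∈ B, F (n + 1) z = 0 := by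
    intro n z hz
    have hnull : μQ z (Tset B (n + 1)) = 0 := by
      refine measure_mono_null (fun ω hω => ?_) (hstart0 z)
      have h0 : ω 0 ∉ B := (hitTime_eq_coe_iff.1 hω).2 0 (Nat.succ_pos n)
      exact fun he => h0 (he ▸ hz)
    rw [hFset (n + 1) z]
    exact setLIntegral_measure_zero _ _ hnull
  -- one-step recursion
  have hrec : ∀ x ∉ B, ∀ n, F (n + 1) x = ∫⁻ z, r x z ^ 2 * F n z ∂(Q x) := by
    intro x hx n
    rw [show F (n + 1) x = ∫⁻ ω, (Tset B (n + 1)).indicator (Gfun r (n + 1)) ω ∂(μQ x) from rfl,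
      hstep x _ (hInd (n + 1))]
    refine lintegral_congr fun z => ?_
    calc ∫⁻ ω', (Tset B (n + 1)).indicator (Gfun r (n + 1)) (prepend x ω') ∂(μQ z)
        = ∫⁻ ω', (Tset B n).indicator (fun ω => r x (ω 0) ^ 2 * Gfun r n ω) ω' ∂(μQ z) :=
          lintegral_congr fun ω' => indicator_Gfun_prepend hx n ω'
      _ = ∫⁻ ω', r x z ^ 2 * (Tset B n).indicator (Gfun r n) ω' ∂(μQ z) := by
          apply lintegral_congr_ae
          have hae : ∀ᵐ ω' ∂(μQ z), ω' 0 = z := by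
            rw [ae_iff]
            simpa using hstart0 z
          filter_upwards [hae] with ω' h0
          by_cases hm : ω' ∈ Tset B n
          · rw [indicator_of_mem hm, indicator_of_mem hm, h0]
          · rw [indicator_of_notMem hm, indicator_of_notMem hm, mul_zero]
      _ = r x z ^ 2 * F n z := lintegral_const_mul _ (hInd n)
  -- change of measure
  have hchange : ∀ x ∉ B, ∀ S : Set 𝒳, MeasurableSet S → S ⊆ Bᶜ ∪ A →
      ∀ g : 𝒳 → ℝ≥0∞, Measurable g →
      ∫⁻ z in S, g z ∂(P x) = ∫⁻ z in S, r x z * g z ∂(Q x) := by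
    intro x hx S hS hSsub g hg
    have hres : (P x).restrict S = ((Q x).withDensity (r x)).restrict S := by
      ext D hD
      rw [Measure.restrict_apply hD, Measure.restrict_apply hD,
        withDensity_apply _ (hD.inter hS),
        hrel x hx (D ∩ S) (hD.inter hS) ((inter_subset_right).trans hSsub)]
    calc ∫⁻ z in S, g z ∂(P x)
        = ∫⁻ z, g z ∂(((Q x).withDensity (r x)).restrict S) := by rw [hres]
      _ = ∫⁻ z, g z ∂(((Q x).restrict S).withDensity (r x)) := by rw [restrict_withDensity hS]
      _ = ∫⁻ z in S, r x z * g z ∂(Q x) :=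
          lintegral_withDensity_eq_lintegral_mul _ (hr1 x) hg
  -- measurability of iterK
  have hηmeas : Measurable η := by
    have heq : η = fun x => ∫⁻ z, (univ ×ˢ A).indicator (Function.uncurry r) (x, z) ∂(P x) := by
      funext x
      show (∫⁻ z in A, r x z ∂(P x)) = _
      rw [← lintegral_indicator hA]
      refine lintegral_congr fun z => ?_
      by_cases hz : z ∈ A <;> simp [hz, Function.uncurry]
    rw [heq]
    exact Measurable.lintegral_kernel_prod_right (hrmeas.indicator (MeasurableSet.univ.prod hA))
  have hiterK : ∀ n, Measurable (iterK P r B η n) := by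
    intro n
    induction n with
    | zero => exact hηmeas
    | succ n ih =>
      have heq : iterK P r B η (n + 1) = fun x => ∫⁻ z,
          (univ ×ˢ Bᶜ).indicator (fun p : 𝒳 × 𝒳 => iterK P r B η n p.2 * r p.1 p.2) (x, z)
            ∂(P x) := by
        funext x
        show (∫⁻ z in Bᶜ, iterK P r B η n z * r x z ∂(P x)) = _
        rw [← lintegral_indicator hB.compl]
        refine lintegral_congr fun z => ?_
        by_cases hz : z ∈ Bᶜ <;> simp [hz]
      rw [heq]
      exact Measurable.lintegral_kernel_prod_right
        (((ih.comp measurable_snd).mul hrmeas).indicator (MeasurableSet.univ.prod hB.compl))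
  -- splitting Q-integrals
  have hQae : ∀ x ∉ B, ∀ f : 𝒳 → ℝ≥0∞,
      ∫⁻ z, f z ∂(Q x) = ∫⁻ z in Bᶜ, f z ∂(Q x) + ∫⁻ z in A, f z ∂(Q x) := by
    intro x hx f
    have hfull : (Q x) (Bᶜ ∪ A)ᶜ = 0 := by
      rw [measure_compl (hB.compl.union hA) (measure_ne_top _ _), measure_univ, hQsupp x hx,
        tsub_self]
    have hres : (Q x).restrict (Bᶜ ∪ A) = Q x :=
      Measure.restrict_eq_self_of_ae_mem (by rw [ae_iff]; exact hfull)
    conv_lhs => rw [← hres]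
    exact lintegral_union hA (disjoint_compl_left.mono_right hAB)
  -- main induction
  have claim1 : ∀ n, ∀ x, x ∉ B → F (n + 1) x = iterK P r B η n x := by
    intro n
    induction n with
    | zero =>
      intro x hx
      rw [hrec x hx 0, hQae x hx]
      have h1 : ∫⁻ z in Bᶜ, r x z ^ 2 * F 0 z ∂(Q x) = 0 := by
        rw [setLIntegral_congr_fun hB.compl
          (fun z hz => by rw [hF0Bc z hz, mul_zero])]
        simp
      have h2 : ∫⁻ z in A, r x z ^ 2 * F 0 z ∂(Q x) = ∫⁻ z in A, r x z * r x z ∂(Q x) := by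
        refine setLIntegral_congr_fun hA (fun z hz => ?_)
        rw [hF0B z (hAB hz), mul_one, sq]
      rw [h1, h2, zero_add]
      have hc := hchange x hx A hA subset_union_right (r x) (hr1 x)
      rw [← hc]
      rfl
    | succ n ih =>
      intro x hx
      rw [hrec x hx (n + 1), hQae x hx]
      have h2 : ∫⁻ z in A, r x z ^ 2 * F (n + 1) z ∂(Q x) = 0 := by
        rw [setLIntegral_congr_fun hA
          (fun z hz => by rw [hFposB n z (hAB hz), mul_zero])]
        simp
      have h1 : ∫⁻ z in Bᶜ, r x z ^ 2 * F (n + 1) z ∂(Q x)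
          = ∫⁻ z in Bᶜ, r x z * (iterK P r B η n z * r x z) ∂(Q x) := by
        refine setLIntegral_congr_fun hB.compl (fun z hz => ?_)
        rw [ih z hz, sq]
        ring
      rw [h1, h2, add_zero]
      have hc := hchange x hx Bᶜ hB.compl subset_union_left
        (fun z => iterK P r B η n z * r x z) ((hiterK n).mul (hr1 x))
      rw [← hc]
      rfl
  constructor
  · intro n hn
    obtain ⟨m, rfl⟩ : ∃ m, n = m + 1 := ⟨n - 1, (Nat.succ_pred_eq_of_pos hn).symm⟩
    have hmain : (∫⁻ ω in {ω | hitTime B ω = ((m + 1 : ℕ) : ℕ∞)}, (estR B r ω) ^ 2 ∂(μQ y))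
        = F (m + 1) y := by
      rw [show {ω | hitTime B ω = ((m + 1 : ℕ) : ℕ∞)} = Tset B (m + 1) from rfl]
      rw [setLIntegral_congr_fun (hTmeas (m + 1))
        (fun ω hω => estR_sq_eq_on_Tset hω)]
      exact (hFset (m + 1) y).symm
    rw [hmain, claim1 m y hy]
    simp
  · calc ∫⁻ ω, (estR B r ω) ^ 2 ∂(μQ y)
        = ∫⁻ ω, ∑' n : ℕ, (Tset B n).indicator (Gfun r n) ω ∂(μQ y) :=
          lintegral_congr fun ω => estR_sq_eq_tsum ω
      _ = ∑' n : ℕ, F n y := lintegral_tsum fun n => (hInd n).aemeasurable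
      _ = F 0 y + ∑' n : ℕ, F (n + 1) y := tsum_eq_zero_add' ENNReal.summable
      _ = ∑' n : ℕ, iterK P r B η n y := by
          rw [hF0Bc y hy, zero_add]
          exact tsum_congr fun n => claim1 n y hy
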